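/- arXiv:2503.01179 — 5 statements merged into one kernel-verified Lean document; each statement's English description precedes it below -/
import Mathlib

section
/- Consider the cyclic monomolecular mass-action network X_1 → X_2 → ... → X_n → X_1 with rate constants κ_1,...,κ_n, whose steady-state ideal is I_N = ⟨κ_n x_n - κ_1 x_1, κ_1 x_1 - κ_2 x_2, ..., κ_{n-1} x_{n-1} - κ_n x_n⟩ in Q(κ)[x_1,...,x_n]. Cut the cycle at complexes X_a and X_b with 1 ≤ a < b-1 ≤ n-1, giving subnetworks N_1 (the chain X_a → ... → X_b) and N_2 (the chain X_b → ... → X_n → X_1 → ... → X_a), with steady-state ideals I_{N_1} = ⟨κ_a x_a, ..., κ_{b-1} x_{b-1}⟩ and I_{N_2} = ⟨κ_1 x_1, ..., κ_{a-1} x_{a-1}, κ_b x_b, ..., κ_n x_n⟩. Let φ_i be the ring homomorphism sending variables and rate constants not belonging to N_i to 0. Then for n ≥ 4 and eliminating x_1, one has φ_i(I_N ∩ Q(κ)[x_2,...,x_n]) = I_{N_i} ∩ Q(κ)[x_2,...,x_n] for i = 1, 2. -/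
open MvPolynomial

namespace CyclicCRN

variable {n : ℕ} [NeZero n]

/-- Variables: `Sum.inl i` is the rate constant `κ_{i+1}`, `Sum.inr i` is the species
concentration `x_{i+1}` (0-based indexing of the `n` species). -/
abbrev R (n : ℕ) := MvPolynomial (Fin n ⊕ Fin n) ℚ

noncomputable def κ (i : Fin n) : R n := X (Sum.inl i)
noncomputable def x (i : Fin n) : R n := X (Sum.inr i)

/-- Steady-state ideal of the cycle `X_1 → X_2 → ⋯ → X_n → X_1`:
generated by `κ_i x_i - κ_{i+1} x_{i+1}` (indices mod `n`). -/
noncomputable def IN (n : ℕ) [NeZero n] : Ideal (R n) :=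
  Ideal.span { p | ∃ i : Fin n, p = κ i * x i - κ (i + 1) * x (i + 1) }

/-- Steady-state ideal of the chain subnetwork `N_1 : X_a → ⋯ → X_b`
(0-based indices `a ≤ i < b`): the monomial ideal `⟨κ_a x_a, …, κ_{b-1} x_{b-1}⟩`. -/
noncomputable def IN1 (n a b : ℕ) : Ideal (R n) :=
  Ideal.span { p | ∃ i : Fin n, a ≤ (i : ℕ) ∧ (i : ℕ) < b ∧ p = κ i * x i }

/-- Steady-state ideal of the chain subnetwork `N_2 : X_b → ⋯ → X_n → X_1 → ⋯ → X_a`: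
the monomial ideal `⟨κ_1 x_1, …, κ_{a-1} x_{a-1}, κ_b x_b, …, κ_n x_n⟩`. -/
noncomputable def IN2 (n a b : ℕ) : Ideal (R n) :=
  Ideal.span { p | ∃ i : Fin n, ((i : ℕ) < a ∨ b ≤ (i : ℕ)) ∧ p = κ i * x i }

/-- Projection onto `N_1`: kills species outside `{X_a, …, X_b}` and rate constants of
reactions outside `N_1` (i.e. `κ_i` with `i ∉ [a, b-1]`). -/
noncomputable def φ1 (n a b : ℕ) : R n →ₐ[ℚ] R n :=
  aeval (fun v => match v with
    | Sum.inl i => if a ≤ (i : ℕ) ∧ (i : ℕ) < b then X (Sum.inl i) else 0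
    | Sum.inr i => if a ≤ (i : ℕ) ∧ (i : ℕ) ≤ b then X (Sum.inr i) else 0)

/-- Projection onto `N_2`: kills species outside `{X_b, …, X_n, X_1, …, X_a}` and rate
constants of reactions outside `N_2`. -/
noncomputable def φ2 (n a b : ℕ) : R n →ₐ[ℚ] R n :=
  aeval (fun v => match v with
    | Sum.inl i => if (i : ℕ) < a ∨ b ≤ (i : ℕ) then X (Sum.inl i) else 0
    | Sum.inr i => if (i : ℕ) ≤ a ∨ b ≤ (i : ℕ) then X (Sum.inr i) else 0)

/-- Polynomials not involving the species variable `x_1` (0-based index `0`). -/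
def Elim (n : ℕ) (hn : 0 < n) : Set (R n) :=
  { f | ∀ d ∈ f.support, d (Sum.inr ⟨0, hn⟩) = 0 }

/-!
Both projections are algebra maps `ψ` that keep the rate constants of a set `S` of reactions
together with the species they consume, and kill all other rate constants. Such a `ψ` sends each
generator `κ_i x_i - κ_{i+1} x_{i+1}` of `I_N` into the monomial ideal `⟨κ_i x_i : i ∈ S⟩`, and it
never creates `x_1`; this gives `⊆`. Conversely, a monomial ideal meets the polynomials free of
`x_1` in the ideal spanned by its generators free of `x_1`, and such a generator `κ_i x_i` is the
image of `κ_i x_i - κ_j x_j ∈ I_N ∩ ℚ(κ)[x_2, …, x_n]` for any reaction `j ∉ S` not consuming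
`x_1`; cutting the cycle provides one.
-/

set_option linter.unusedSectionVars false

lemma map_supported_le {σ R : Type*} [CommSemiring R] {s : Set σ}
    (ψ : MvPolynomial σ R →ₐ[R] MvPolynomial σ R) (hψ : ∀ v ∈ s, ψ (X v) ∈ supported R s) :
    (supported R s).map ψ ≤ supported R s := by
  rw [supported_eq_adjoin_X, AlgHom.map_adjoin, Algebra.adjoin_le_iff]
  rintro _ ⟨_, ⟨v, hv, rfl⟩, rfl⟩
  exact hψ v hv

lemma mem_span_monomial_inter_supported {σ R : Type*} [CommSemiring R] [Nontrivial R]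
    {D : Set (σ →₀ ℕ)} {s : Set σ} {f : MvPolynomial σ R}
    (hf : f ∈ Ideal.span ((fun d => monomial d (1 : R)) '' D)) (hs : f ∈ supported R s) :
    f ∈ Ideal.span ((fun d => monomial d (1 : R)) '' D ∩ supported R s) := by
  rw [← Set.image_inter_preimage, mem_ideal_span_monomial_image]
  rw [mem_ideal_span_monomial_image] at hf
  intro m hm
  obtain ⟨d, hd, hdm⟩ := hf m hm
  refine ⟨d, ⟨hd, ?_⟩, hdm⟩
  rw [Set.mem_preimage, SetLike.mem_coe, mem_supported, vars_monomial one_ne_zero]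
  intro v hv
  exact mem_supported.mp hs ((mem_vars_iff_mem_support v).mpr ⟨m, hm, Finsupp.support_mono hdm hv⟩)

lemma elim_eq_supported (hn : 0 < n) :
    Elim n hn = (supported ℚ ({Sum.inr ⟨0, hn⟩}ᶜ : Set (Fin n ⊕ Fin n)) : Set (R n)) := by
  ext f
  simp only [Elim, SetLike.mem_coe, mem_supported, Set.subset_compl_singleton_iff,
    mem_vars_iff_mem_support, Finsupp.mem_support_iff, Set.mem_ofPred_eq]
  grind

lemma κ_mul_x_mem_supported {s : Set (Fin n ⊕ Fin n)} {i : Fin n} (hκ : Sum.inl i ∈ s)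
    (hx : Sum.inr i ∈ s) : κ i * x i ∈ supported ℚ s :=
  mul_mem (X_mem_supported.mpr hκ) (X_mem_supported.mpr hx)

lemma κ_mul_x_eq_monomial (i : Fin n) :
    κ i * x i = monomial (Finsupp.single (Sum.inl i) 1 + Finsupp.single (Sum.inr i) 1) 1 := by
  rw [monomial_single_add, ← X_pow_eq_monomial, pow_one, pow_one, κ, x]

open Fin.NatCast Fin.CommRing in
lemma κ_mul_x_sub_add_mem_IN (i : Fin n) (k : ℕ) :
    κ i * x i - κ (i + (k : Fin n)) * x (i + (k : Fin n)) ∈ IN n := by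
  induction k with
  | zero => simp
  | succ k ih =>
    have hstep : κ (i + (k : Fin n)) * x (i + (k : Fin n))
        - κ (i + (k : Fin n) + 1) * x (i + (k : Fin n) + 1) ∈ IN n :=
      Ideal.subset_span ⟨_, rfl⟩
    rw [Nat.cast_succ, ← add_assoc]
    convert add_mem ih hstep using 1
    ring

open Fin.NatCast Fin.CommRing in
lemma κ_mul_x_sub_mem_IN (i j : Fin n) : κ i * x i - κ j * x j ∈ IN n := by
  simpa using κ_mul_x_sub_add_mem_IN i (j - i : Fin n)

/-- Steady-state ideal of the subnetwork of the cycle formed by the reactions `X_{i+1} → X_{i+2}`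
with `S i`: for such a union of chains the species formation rates generate the same ideal as
the reaction rates `κ_i x_i`. -/
noncomputable def chainIdeal (S : Fin n → Prop) : Ideal (R n) :=
  Ideal.span { p | ∃ i, S i ∧ p = κ i * x i }

lemma chainIdeal_eq_span_monomial (S : Fin n → Prop) :
    chainIdeal S = Ideal.span ((fun d => monomial d (1 : ℚ)) ''
      ((fun i => Finsupp.single (Sum.inl i) 1 + Finsupp.single (Sum.inr i) 1) '' {i | S i})) := by
  rw [chainIdeal, Set.image_image]
  simp_rw [← κ_mul_x_eq_monomial]
  congr 1
  ext p
  simp [eq_comm]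

section Projection

variable (ψ : R n →ₐ[ℚ] R n) {S T : Fin n → Prop} [DecidablePred S] [DecidablePred T]

lemma map_κ_mul_x (hκ : ∀ i, ψ (κ i) = if S i then κ i else 0)
    (hx : ∀ i, ψ (x i) = if T i then x i else 0) (hST : ∀ i, S i → T i) (i : Fin n) :
    ψ (κ i * x i) = if S i then κ i * x i else 0 := by
  by_cases hi : S i
  · rw [map_mul, hκ, hx, if_pos hi, if_pos hi, if_pos (hST i hi)]
  · rw [map_mul, hκ, if_neg hi, if_neg hi, zero_mul]

lemma map_IN_le_chainIdeal (hκ : ∀ i, ψ (κ i) = if S i then κ i else 0)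
    (hx : ∀ i, ψ (x i) = if T i then x i else 0) (hST : ∀ i, S i → T i) :
    (IN n).map ψ ≤ chainIdeal S := by
  have hmem (i : Fin n) : ψ (κ i * x i) ∈ chainIdeal S := by
    rw [map_κ_mul_x ψ hκ hx hST]
    split_ifs with hi
    exacts [Ideal.subset_span ⟨i, hi, rfl⟩, zero_mem _]
  rw [IN, Ideal.map_span, Ideal.span_le]
  rintro _ ⟨_, ⟨i, rfl⟩, rfl⟩
  rw [map_sub]
  exact sub_mem (hmem i) (hmem (i + 1))

lemma map_X_mem_supported (hκ : ∀ i, ψ (κ i) = if S i then κ i else 0)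
    (hx : ∀ i, ψ (x i) = if T i then x i else 0) {s : Set (Fin n ⊕ Fin n)} {v : Fin n ⊕ Fin n}
    (hv : v ∈ s) : ψ (X v) ∈ supported ℚ s := by
  cases v with
  | inl i =>
    change ψ (κ i) ∈ _
    rw [hκ]
    split_ifs
    exacts [X_mem_supported.mpr hv, zero_mem _]
  | inr i =>
    change ψ (x i) ∈ _
    rw [hx]
    split_ifs
    exacts [X_mem_supported.mpr hv, zero_mem _]

theorem span_map_IN_inter_elim (hn : 0 < n)
    (hκ : ∀ i, ψ (κ i) = if S i then κ i else 0)
    (hx : ∀ i, ψ (x i) = if T i then x i else 0) (hST : ∀ i, S i → T i)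
    (j : Fin n) (hj0 : (j : ℕ) ≠ 0) (hjS : ¬ S j) :
    Ideal.span (ψ '' ((IN n : Set (R n)) ∩ Elim n hn))
      = Ideal.span ((chainIdeal S : Set (R n)) ∩ Elim n hn) := by
  rw [elim_eq_supported]
  apply le_antisymm
  · rw [Ideal.span_le]
    rintro _ ⟨f, ⟨hf, hfs⟩, rfl⟩
    exact Ideal.subset_span ⟨map_IN_le_chainIdeal ψ hκ hx hST (Ideal.mem_map_of_mem ψ hf),
      map_supported_le ψ (fun v hv => map_X_mem_supported ψ hκ hx hv) ⟨f, hfs, rfl⟩⟩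
  · rw [Ideal.span_le]
    rintro f ⟨hf, hfs⟩
    rw [SetLike.mem_coe, chainIdeal_eq_span_monomial] at hf
    refine Ideal.span_le.mpr ?_ (mem_span_monomial_inter_supported hf hfs)
    rintro _ ⟨⟨_, ⟨i, hi : S i, rfl⟩, rfl⟩, his⟩
    beta_reduce at his ⊢
    rw [← κ_mul_x_eq_monomial] at his ⊢
    have hjs : κ j * x j ∈ supported ℚ ({Sum.inr ⟨0, hn⟩}ᶜ : Set (Fin n ⊕ Fin n)) :=
      κ_mul_x_mem_supported (by simp) (by simp [Fin.ext_iff, hj0])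
    refine Ideal.subset_span ⟨_, ⟨κ_mul_x_sub_mem_IN i j, sub_mem his hjs⟩, ?_⟩
    rw [map_sub, map_κ_mul_x ψ hκ hx hST, map_κ_mul_x ψ hκ hx hST, if_pos hi, if_neg hjS, sub_zero]

end Projection

/-- **Cutting a cycle commutes with elimination of a species.**
For the monomolecular, cyclic, simple, weakly reversible mass-action network on `n ≥ 4`
species, cut at the complexes `X_a` and `X_b` (0-based, `a + 1 < b ≤ n - 1`, both resulting
chains having at least 3 species), projection onto each subnetwork commutes with elimination
of the species `x_1`:
`φ_i(I_N ∩ ℚ(κ)[x_2,…,x_n]) = I_{N_i} ∩ ℚ(κ)[x_2,…,x_n]` for `i = 1, 2`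
(as ideals generated by these sets). -/
theorem elimination_commutes_with_projection
    (hn : 4 ≤ n) (a b : ℕ) (hab : a + 1 < b) (hbn : b ≤ n - 1) :
    (Ideal.span ((φ1 n a b) '' ((IN n : Set (R n)) ∩ Elim n (by omega)))
      = Ideal.span ((IN1 n a b : Set (R n)) ∩ Elim n (by omega))) ∧
    (Ideal.span ((φ2 n a b) '' ((IN n : Set (R n)) ∩ Elim n (by omega)))
      = Ideal.span ((IN2 n a b : Set (R n)) ∩ Elim n (by omega))) := by
  constructor
  · have h := span_map_IN_inter_elim (φ1 n a b) (S := fun i : Fin n => a ≤ i ∧ i < b)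
      (T := fun i : Fin n => a ≤ i ∧ i ≤ b) (by omega) (fun i => aeval_X _ _)
      (fun i => aeval_X _ _) (fun i hi => ⟨hi.1, hi.2.le⟩) ⟨n - 1, by omega⟩
      (by dsimp only; omega) (by dsimp only; omega)
    simpa only [chainIdeal, IN1, and_assoc] using h
  · exact span_map_IN_inter_elim (φ2 n a b) (S := fun i : Fin n => i < a ∨ b ≤ i)
      (T := fun i : Fin n => i ≤ a ∨ b ≤ i) (by omega) (fun i => aeval_X _ _)
      (fun i => aeval_X _ _) (fun i hi => hi.imp le_of_lt id) ⟨b - 1, by omega⟩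
      (by dsimp only; omega) (by dsimp only; omega)

end CyclicCRN
end

section
/- For the 3-cycle mass-action network X_1 → X_2 → X_3 → X_1, cut into subnetworks N_1: X_1 → X_2 → X_3 and N_2: X_3 → X_1, elimination of species X_3 does not commute with projection to N_1; specifically, φ_1(I_N ∩ Q(κ)[x_1,x_2]) = ⟨κ_1 x_1 - κ_2 x_2⟩, which is strictly contained in I_{N_1} ∩ Q(κ)[x_1,x_2] = ⟨κ_1 x_1, κ_2 x_2⟩. -/
open MvPolynomial

namespace ThreeCycleCRN

/-- Variables of `ℚ[κ_1,κ_2,κ_3,x_1,x_2,x_3]`: indices `0,1,2` are `κ_1,κ_2,κ_3` and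
indices `3,4,5` are `x_1,x_2,x_3`. -/
abbrev R := MvPolynomial (Fin 6) ℚ

noncomputable def κ1 : R := X 0
noncomputable def κ2 : R := X 1
noncomputable def κ3 : R := X 2
noncomputable def x1 : R := X 3
noncomputable def x2 : R := X 4
noncomputable def x3 : R := X 5

/-- Steady-state ideal of the 3-cycle `X_1 → X_2 → X_3 → X_1`. -/
noncomputable def IN : Ideal R :=
  Ideal.span {-(κ1 * x1) + κ3 * x3, κ1 * x1 - κ2 * x2, κ2 * x2 - κ3 * x3}

/-- Steady-state ideal of the chain `N_1 : X_1 → X_2 → X_3` (after collapsing). -/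
noncomputable def IN1 : Ideal R := Ideal.span {κ1 * x1, κ2 * x2}

/-- The projection `φ_1` onto `N_1`: fixes `x_1, x_2, κ_1, κ_2` and sends `x_3, κ_3` to `0`. -/
noncomputable def φ1 : R →ₐ[ℚ] R :=
  aeval (fun v : Fin 6 => if v = 2 ∨ v = 5 then 0 else X v)

/-- Polynomials not involving `x_3`. -/
def Elim : Set R := { f | ∀ d ∈ f.support, d 5 = 0 }

/-! ### Auxiliary machinery -/

/-- The projection killing the variable `κ_3 = X 2`. -/
noncomputable def π : R →ₐ[ℚ] R := aeval (fun i : Fin 6 => if i = 2 then 0 else X i)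

lemma pi_dvd (f : R) : (X 2 : R) ∣ f - π f := by
  induction f using MvPolynomial.induction_on with
  | C a => simp [π]
  | add p q hp hq =>
      have : p + q - π (p + q) = (p - π p) + (q - π q) := by rw [map_add]; ring
      rw [this]; exact dvd_add hp hq
  | mul_X p i hp =>
      by_cases h : i = 2
      · subst h
        have : p * X 2 - π (p * X 2) = p * X 2 := by simp [π]
        rw [this]; exact ⟨p, mul_comm _ _⟩
      · have : p * X i - π (p * X i) = (p - π p) * X i := by
          rw [map_mul]; simp [π, h]; ring
        rw [this]; exact Dvd.dvd.mul_right hp _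

lemma dvd_iff_pi (f : R) : (X 2 : R) ∣ f ↔ π f = 0 := by
  constructor
  · rintro ⟨c, rfl⟩; simp [π]
  · intro h
    have := pi_dvd f
    rwa [h, sub_zero] at this

lemma not_unit_k3 : ¬ IsUnit (X 2 : R) := by
  intro h
  have h0 : IsUnit (aeval (fun _ : Fin 6 => (0:ℚ)) (X 2 : R)) := h.map _
  simp at h0

lemma prime_k3 : Prime (X 2 : R) := by
  refine ⟨X_ne_zero 2, not_unit_k3, ?_⟩
  intro a b hab
  rw [dvd_iff_pi] at hab
  rw [map_mul] at hab
  rcases mul_eq_zero.mp hab with h | h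
  · exact Or.inl ((dvd_iff_pi a).mpr h)
  · exact Or.inr ((dvd_iff_pi b).mpr h)

noncomputable abbrev Loc := Localization.Away (X 2 : R)

noncomputable def u : Fin 6 → Loc := fun i =>
  if i = 5 then algebraMap R Loc (X 1 * X 4) * IsLocalization.Away.invSelf (S := Loc) ((X 2 : R))
  else algebraMap R Loc (X i)

noncomputable def Φ : R →+* Loc :=
  eval₂Hom ((algebraMap R Loc).comp (C : ℚ →+* R)) u

lemma Phi_elim {f : R} (hf : f ∈ Elim) : Φ f = algebraMap R Loc f := by
  refine hom_congr_vars ?_ ?_ rfl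
  · ext q
    simp [Φ]
  · intro i hi _
    have hi5 : i ≠ 5 := by
      intro h; subst h
      obtain ⟨d, hd, h5⟩ := (mem_vars 5).mp hi
      exact (Finsupp.mem_support_iff.mp h5) (hf d hd)
    simp [Φ, u, if_neg hi5]

lemma k3u : algebraMap R Loc (X 2) * IsLocalization.Away.invSelf (S := Loc) ((X 2 : R)) = 1 :=
  IsLocalization.Away.mul_invSelf _

lemma Phi_g2 : Φ (κ1*x1 - κ2*x2) = algebraMap R Loc (κ1*x1 - κ2*x2) := by
  have h0 : (0 : Fin 6) ≠ 5 := by decide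
  have h1 : (1 : Fin 6) ≠ 5 := by decide
  have h3 : (3 : Fin 6) ≠ 5 := by decide
  have h4 : (4 : Fin 6) ≠ 5 := by decide
  simp only [Φ, κ1, κ2, x1, x2, map_sub, map_mul, eval₂Hom_X', u, h0, h1, h3, h4, if_false]

lemma Phi_g3 : Φ (κ2*x2 - κ3*x3) = 0 := by
  have h1 : (1 : Fin 6) ≠ 5 := by decide
  have h2 : (2 : Fin 6) ≠ 5 := by decide
  have h4 : (4 : Fin 6) ≠ 5 := by decide
  have h5 : ((5 : Fin 6) = 5) := rfl
  simp only [Φ, κ2, κ3, x2, x3, map_sub, map_mul, eval₂Hom_X', u, h1, h2, h4, h5, if_false,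
    if_true]
  linear_combination (-(algebraMap R Loc (X 1) * algebraMap R Loc (X 4))) * k3u

lemma g2_ne_zero : (κ1*x1 - κ2*x2 : R) ≠ 0 := by
  intro h
  have := congrArg (eval ![1,0,0,1,0,0]) h
  simp [κ1, κ2, x1, x2] at this

lemma k3_not_dvd_g2 : ¬ (X 2 : R) ∣ (κ1*x1 - κ2*x2) := by
  rw [dvd_iff_pi]
  intro h
  have : π (κ1*x1 - κ2*x2) = κ1*x1 - κ2*x2 := by
    simp [π, κ1, κ2, x1, x2]
  rw [this] at h
  exact g2_ne_zero h

lemma dvd_of_pow_mul : ∀ (n : ℕ) (p f : R), f * (X 2)^n = p * (κ1*x1 - κ2*x2) →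
    (κ1*x1 - κ2*x2 : R) ∣ f := by
  intro n
  induction n with
  | zero =>
      intro p f h
      simp only [pow_zero, mul_one] at h
      exact ⟨p, by rw [h]; ring⟩
  | succ n ih =>
      intro p f h
      have hdvd : (X 2 : R) ∣ p * (κ1*x1 - κ2*x2) := by
        rw [← h, pow_succ]; exact ⟨f * X 2 ^ n, by ring⟩
      rcases prime_k3.2.2 p _ hdvd with hp | hg
      · obtain ⟨q, rfl⟩ := hp
        refine ih q f ?_
        apply mul_left_cancel₀ (X_ne_zero (2 : Fin 6))
        rw [show (X 2 : R) * (f * X 2 ^ n) = f * X 2 ^ (n+1) by ring, h]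
        ring
      · exact absurd hg k3_not_dvd_g2

lemma main_lemma {f : R} (hf : f ∈ Elim)
    (hIN : f ∈ Ideal.span {(κ1*x1 - κ2*x2 : R), κ2*x2 - κ3*x3}) :
    f ∈ Ideal.span {(κ1*x1 - κ2*x2 : R)} := by
  rw [Ideal.mem_span_pair] at hIN
  obtain ⟨a, b, hab⟩ := hIN
  have h1 : algebraMap R Loc f = Φ a * algebraMap R Loc (κ1*x1-κ2*x2) := by
    rw [← Phi_elim hf, ← hab, map_add, map_mul, map_mul, Phi_g2, Phi_g3, mul_zero, add_zero]
  obtain ⟨⟨p, m⟩, hm⟩ := IsLocalization.surj (Submonoid.powers (X 2 : R)) (Φ a)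
  obtain ⟨n, hn⟩ := m.2
  have hn' : (X 2 : R)^n = ↑m := hn
  have hinj : Function.Injective (algebraMap R Loc) :=
    IsLocalization.injective Loc (powers_le_nonZeroDivisors_of_noZeroDivisors (X_ne_zero 2))
  have key : f * (X 2)^n = p * (κ1*x1-κ2*x2) := by
    apply hinj
    rw [map_mul, map_mul, h1, hn']
    rw [show Φ a * algebraMap R Loc (κ1*x1-κ2*x2) * algebraMap R Loc ↑m
        = (Φ a * algebraMap R Loc ↑m) * algebraMap R Loc (κ1*x1-κ2*x2) by ring, hm]
  rw [Ideal.mem_span_singleton]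
  exact dvd_of_pow_mul n p f key

lemma IN_eq : IN = Ideal.span {(κ1*x1 - κ2*x2 : R), κ2*x2 - κ3*x3} := by
  apply le_antisymm
  · rw [IN, Ideal.span_le]
    rintro f hf
    rcases hf with rfl | rfl | rfl
    · exact Ideal.mem_span_pair.mpr ⟨-1, -1, by ring⟩
    · exact Ideal.mem_span_pair.mpr ⟨1, 0, by ring⟩
    · exact Ideal.mem_span_pair.mpr ⟨0, 1, by ring⟩
  · rw [Ideal.span_le]
    rintro f hf
    rcases hf with rfl | rfl
    · exact Ideal.subset_span (Or.inr (Or.inl rfl))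
    · exact Ideal.subset_span (Or.inr (Or.inr rfl))

lemma elim_XX {i j : Fin 6} (hi : i ≠ 5) (hj : j ≠ 5) : (X i * X j : R) ∈ Elim := by
  intro d hd
  have hxx : (X i * X j : R) = monomial (Finsupp.single i 1 + Finsupp.single j 1) 1 := by
    rw [show (1:ℚ) = 1*1 by ring, ← monomial_mul, ← X_pow_eq_monomial, ← X_pow_eq_monomial,
      pow_one, pow_one]
  rw [hxx, support_monomial] at hd
  simp only [one_ne_zero, if_false, Finset.mem_singleton] at hd
  subst hd
  rw [Finsupp.add_apply, Finsupp.single_apply, Finsupp.single_apply, if_neg hi, if_neg hj]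
  rfl

lemma elim_sub {a b : R} (ha : a ∈ Elim) (hb : b ∈ Elim) : a - b ∈ Elim := by
  intro d hd
  by_contra h5
  have hca : coeff d a = 0 := by
    by_contra hc
    exact h5 (ha d (mem_support_iff.mpr hc))
  have hcb : coeff d b = 0 := by
    by_contra hc
    exact h5 (hb d (mem_support_iff.mpr hc))
  have := mem_support_iff.mp hd
  rw [coeff_sub, hca, hcb, sub_zero] at this
  exact this rfl

lemma g2_elim : (κ1*x1 - κ2*x2 : R) ∈ Elim := by
  rw [κ1, κ2, x1, x2]
  exact elim_sub (elim_XX (by decide) (by decide)) (elim_XX (by decide) (by decide))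

lemma phi1_g2 : φ1 (κ1*x1 - κ2*x2) = κ1*x1 - κ2*x2 := by
  have h0 : ¬((0 : Fin 6) = 2 ∨ (0 : Fin 6) = 5) := by decide
  have h1 : ¬((1 : Fin 6) = 2 ∨ (1 : Fin 6) = 5) := by decide
  have h3 : ¬((3 : Fin 6) = 2 ∨ (3 : Fin 6) = 5) := by decide
  have h4 : ¬((4 : Fin 6) = 2 ∨ (4 : Fin 6) = 5) := by decide
  simp only [φ1, κ1, κ2, x1, x2, map_sub, map_mul, aeval_X, h0, h1, h3, h4, if_false]

/-- **Elimination of `X_3` does not commute with projection to `N_1`** for the 3-cycle: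
`φ_1(I_N ∩ ℚ(κ)[x_1,x_2]) = ⟨κ_1 x_1 - κ_2 x_2⟩`, which is strictly contained in
`I_{N_1} ∩ ℚ(κ)[x_1,x_2] = ⟨κ_1 x_1, κ_2 x_2⟩`. -/
theorem elimination_does_not_commute :
    Ideal.span (φ1 '' ((IN : Set R) ∩ Elim)) = Ideal.span {κ1 * x1 - κ2 * x2} ∧
    Ideal.span ((IN1 : Set R) ∩ Elim) = Ideal.span {κ1 * x1, κ2 * x2} ∧
    (Ideal.span {κ1 * x1 - κ2 * x2} : Ideal R) < Ideal.span {κ1 * x1, κ2 * x2} := by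
  refine ⟨?_, ?_, ?_⟩
  · apply le_antisymm
    · rw [Ideal.span_le]
      rintro _ ⟨g, ⟨hgIN, hgE⟩, rfl⟩
      have hg2 : g ∈ Ideal.span {(κ1*x1 - κ2*x2 : R)} := by
        apply main_lemma hgE
        rw [← IN_eq]
        exact hgIN
      rw [Ideal.mem_span_singleton] at hg2
      obtain ⟨c, rfl⟩ := hg2
      rw [map_mul, phi1_g2]
      exact Ideal.mul_mem_right _ _ (Ideal.subset_span rfl)
    · rw [Ideal.span_le]
      rintro f rfl
      apply Ideal.subset_span
      exact ⟨κ1*x1 - κ2*x2, ⟨Ideal.subset_span (Or.inr (Or.inl rfl)), g2_elim⟩, phi1_g2⟩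
  · apply le_antisymm
    · rw [Ideal.span_le]
      intro f hf
      exact hf.1
    · rw [Ideal.span_le]
      rintro f (rfl | rfl)
      · exact Ideal.subset_span ⟨Ideal.subset_span (Or.inl rfl),
          by rw [κ1, x1]; exact elim_XX (by decide) (by decide)⟩
      · exact Ideal.subset_span ⟨Ideal.subset_span (Or.inr rfl),
          by rw [κ2, x2]; exact elim_XX (by decide) (by decide)⟩
  · have hle : (Ideal.span {κ1 * x1 - κ2 * x2} : Ideal R) ≤ Ideal.span {κ1 * x1, κ2 * x2} := by
      rw [Ideal.span_le]
      rintro f rfl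
      exact Ideal.mem_span_pair.mpr ⟨1, -1, by ring⟩
    refine lt_of_le_of_ne hle ?_
    intro heq
    have h1 : (κ1 * x1 : R) ∈ Ideal.span {κ1 * x1 - κ2 * x2} := by
      rw [heq]
      exact Ideal.subset_span (Or.inl rfl)
    rw [Ideal.mem_span_singleton] at h1
    obtain ⟨c, hc⟩ := h1
    have := congrArg (eval (fun _ => (1:ℚ))) hc
    simp [κ1, κ2, x1, x2] at this

end ThreeCycleCRN
end

section
/- For a multivariate polynomial f(x) = Σ_α c_α x^α ∈ R[x_1,...,x_n] and a vertex α' of the Newton polytope of f (the convex hull of the exponent vectors with c_α ≠ 0), there exists a point x' ∈ R^n_{>0} such that sign(f(x')) = sign(c_{α'}). -/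
/-!
Separate the vertex `α'` from the other exponents by a linear functional: this gives a weight
vector `v` with `⟨α', v⟩ > ⟨d, v⟩` for every other exponent `d` of `f`. At `x = (e^{t v_i})_i`
the polynomial becomes the exponential sum `∑_d c_d e^{t ⟨d, v⟩}`, which for `t → ∞` is
dominated by its term `c_{α'} e^{t ⟨α', v⟩}`.
-/

open MvPolynomial

/-- The Newton polytope of `f`: the convex hull in `ℝ^n` of the exponent vectors of the
monomials of `f` with nonzero coefficient. -/
noncomputable def newtonPolytope {n : ℕ} (f : MvPolynomial (Fin n) ℝ) : Set (Fin n → ℝ) :=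
  convexHull ℝ ((fun (d : Fin n →₀ ℕ) (i : Fin n) => (d i : ℝ)) '' ↑f.support)

open Filter Topology

theorem Set.Finite.exists_forall_lt_of_mem_extremePoints_convexHull {E : Type*}
    [AddCommGroup E] [Module ℝ E] [TopologicalSpace E] [IsTopologicalAddGroup E]
    [ContinuousSMul ℝ E] [LocallyConvexSpace ℝ E] [T2Space E]
    {s : Set E} (hs : s.Finite) {p : E} (hp : p ∈ (convexHull ℝ s).extremePoints ℝ) :
    ∃ L : StrongDual ℝ E, ∀ q ∈ s, q ≠ p → L q < L p := by
  have hp_notMem : p ∉ convexHull ℝ (s \ {p}) := fun h =>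
    ((convex_convexHull ℝ s).mem_extremePoints_iff_mem_sdiff_convexHull_sdiff.1 hp).2 <|
      convexHull_mono (Set.sdiff_subset_sdiff_left (subset_convexHull ℝ s)) h
  obtain ⟨L, u, hLu, hup⟩ := geometric_hahn_banach_closed_point (convex_convexHull ℝ _)
    ((hs.sdiff (t := {p})).isClosed_convexHull ℝ) hp_notMem
  exact ⟨L, fun q hq hqp => (hLu q (subset_convexHull ℝ _ ⟨hq, hqp⟩)).trans hup⟩

theorem exists_weight_lt_of_mem_extremePoints_newtonPolytope {n : ℕ}
    {f : MvPolynomial (Fin n) ℝ} {α : Fin n →₀ ℕ}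
    (hα : (fun i => (α i : ℝ)) ∈ (newtonPolytope f).extremePoints ℝ) :
    ∃ v : Fin n → ℝ, ∀ d ∈ f.support, d ≠ α →
      ∑ i, (d i : ℝ) * v i < ∑ i, (α i : ℝ) * v i := by
  obtain ⟨L, hL⟩ :=
    (f.support.finite_toSet.image _).exists_forall_lt_of_mem_extremePoints_convexHull hα
  have hL_eq : ∀ y : Fin n → ℝ, L y = ∑ i, y i * L (Pi.single i 1) := fun y => by
    conv_lhs => rw [← Finset.univ_sum_single y, map_sum]
    refine Finset.sum_congr rfl fun i _ => ?_
    rw [← smul_eq_mul, ← map_smul, ← Pi.single_smul', smul_eq_mul, mul_one]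
  refine ⟨fun i => L (Pi.single i 1), fun d hd hdα => ?_⟩
  simp only [← hL_eq]
  refine hL _ ⟨d, hd, rfl⟩ fun h => hdα ?_
  ext i
  exact_mod_cast congrFun h i

theorem eval_exp_mul_eq_sum {n : ℕ} (f : MvPolynomial (Fin n) ℝ) (v : Fin n → ℝ) (t : ℝ) :
    eval (fun i => Real.exp (t * v i)) f =
      ∑ d ∈ f.support, coeff d f * Real.exp (t * ∑ i, (d i : ℝ) * v i) := by
  simp only [eval_eq', ← Real.exp_nat_mul, Finset.mul_sum, ← Real.exp_sum, mul_left_comm t]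

theorem Real.sign_mul_of_pos {a : ℝ} (ha : 0 < a) (b : ℝ) :
    Real.sign (a * b) = Real.sign b := by
  rcases lt_trichotomy b 0 with hb | rfl | hb
  · rw [sign_of_neg (mul_neg_of_pos_of_neg ha hb), sign_of_neg hb]
  · rw [mul_zero]
  · rw [sign_of_pos (mul_pos ha hb), sign_of_pos hb]

theorem Filter.Tendsto.eventually_sign_eq {α : Type*} {l : Filter α} {g : α → ℝ} {c : ℝ}
    (hg : Tendsto g l (𝓝 c)) (hc : c ≠ 0) : ∀ᶠ x in l, Real.sign (g x) = Real.sign c := by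
  rcases hc.lt_or_gt with hc | hc
  · filter_upwards [hg.eventually_lt_const hc] with x hx
    rw [Real.sign_of_neg hx, Real.sign_of_neg hc]
  · filter_upwards [hg.eventually_const_lt hc] with x hx
    rw [Real.sign_of_pos hx, Real.sign_of_pos hc]

theorem tendsto_exp_mul_atTop_nhds_zero {r : ℝ} (hr : r < 0) :
    Tendsto (fun t => Real.exp (t * r)) atTop (𝓝 0) :=
  Real.tendsto_exp_atBot.comp (tendsto_id.atTop_mul_const_of_neg hr)

theorem tendsto_sum_mul_exp_mul_sub {ι : Type*} {s : Finset ι} {c w : ι → ℝ} {a : ι}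
    (ha : a ∈ s) (hw : ∀ i ∈ s, i ≠ a → w i < w a) :
    Tendsto (fun t => ∑ i ∈ s, c i * Real.exp (t * (w i - w a))) atTop (𝓝 (c a)) := by
  classical
  have hc_sum : c a = ∑ i ∈ s, if i = a then c i else 0 := by simp [ha]
  rw [hc_sum]
  refine tendsto_finsetSum s fun i hi => ?_
  by_cases hia : i = a
  · simp [hia]
  · simpa [hia] using (tendsto_exp_mul_atTop_nhds_zero (sub_neg.2 (hw i hi hia))).const_mul (c i)

theorem eventually_sign_sum_mul_exp_mul {ι : Type*} {s : Finset ι} {c w : ι → ℝ} {a : ι}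
    (ha : a ∈ s) (hca : c a ≠ 0) (hw : ∀ i ∈ s, i ≠ a → w i < w a) :
    ∀ᶠ t in atTop, Real.sign (∑ i ∈ s, c i * Real.exp (t * w i)) = Real.sign (c a) := by
  filter_upwards [(tendsto_sum_mul_exp_mul_sub ha hw).eventually_sign_eq hca] with t ht
  have hfactor : ∑ i ∈ s, c i * Real.exp (t * w i) =
      Real.exp (t * w a) * ∑ i ∈ s, c i * Real.exp (t * (w i - w a)) := by
    simp only [Finset.mul_sum, mul_sub, Real.exp_sub]
    refine Finset.sum_congr rfl fun i _ => ?_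
    field_simp
  rw [hfactor, Real.sign_mul_of_pos (Real.exp_pos _), ht]

/-- **A vertex of the Newton polytope determines the sign of `f` somewhere on the positive
orthant.** If `α'` is an exponent of `f` whose image is a vertex (extreme point) of the Newton
polytope of `f`, then there exists `x' ∈ ℝ^n_{>0}` with `sign (f x') = sign (c_{α'})`. -/
theorem exists_positive_point_sign_eq_of_vertex
    {n : ℕ} (f : MvPolynomial (Fin n) ℝ) (α' : Fin n →₀ ℕ)
    (hα' : α' ∈ f.support)
    (hvert : (fun i => ((α' i : ℕ) : ℝ)) ∈ (newtonPolytope f).extremePoints ℝ) :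
    ∃ x' : Fin n → ℝ, (∀ i, 0 < x' i) ∧
      Real.sign (eval x' f) = Real.sign (coeff α' f) := by
  obtain ⟨v, hv⟩ := exists_weight_lt_of_mem_extremePoints_newtonPolytope hvert
  obtain ⟨t, ht⟩ :=
    (eventually_sign_sum_mul_exp_mul hα' (mem_support_iff.1 hα') hv).exists
  exact ⟨fun i => Real.exp (t * v i), fun i => Real.exp_pos _, by rwa [eval_exp_mul_eq_sum]⟩
end

section
/- Positive parametrization identity for the 2-site phosphorylation network: if (s_0, s_1, s_2, y_1, y_2, y_3, y_4, e, f) ∈ R^9_{>0} is a zero of the nine steady-state polynomials of the 2-site phosphorylation–dephosphorylation mass-action system with positive rate constants k_1,...,k_12, then s_0 = k_10 s_1 f / (k_1 e), s_2 = k_4 s_1 e / (k_7 f), y_1 = (k_10 s_1 f + k_3 s_1 e)/k_2, y_2 = (k_4 k_7 s_1 e f + k_4 k_6 s_1 e^2)/(k_5 k_7 f), y_3 = (k_4 s_1 e + k_9 s_1 f)/k_8, and y_4 = (k_1 k_10 s_1 e f + k_10 k_12 s_1 f^2)/(k_1 k_11 e). -/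
/-- **Positive parametrization identity for the 2-site phosphorylation–dephosphorylation
network.** If all rate constants and all species concentrations are strictly positive and the
nine steady-state equations hold, then `s_0, s_2, y_1, y_2, y_3, y_4` are determined by
`s_1, e, f` via the stated rational expressions. -/
theorem two_site_positive_parametrization
    (k1 k2 k3 k4 k5 k6 k7 k8 k9 k10 k11 k12 : ℝ)
    (hk1 : 0 < k1) (hk2 : 0 < k2) (hk3 : 0 < k3) (hk4 : 0 < k4)
    (hk5 : 0 < k5) (hk6 : 0 < k6) (hk7 : 0 < k7) (hk8 : 0 < k8)
    (hk9 : 0 < k9) (hk10 : 0 < k10) (hk11 : 0 < k11) (hk12 : 0 < k12)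
    (s0 s1 s2 y1 y2 y3 y4 e f : ℝ)
    (hs0 : 0 < s0) (hs1 : 0 < s1) (hs2 : 0 < s2)
    (hy1 : 0 < y1) (hy2 : 0 < y2) (hy3 : 0 < y3) (hy4 : 0 < y4)
    (he : 0 < e) (hf : 0 < f)
    (e1 : -k1 * s0 * e + k11 * y4 - k12 * s0 * f = 0)
    (e2 : k2 * y1 - (k3 + k4) * s1 * e + k8 * y3 - (k9 + k10) * s1 * f = 0)
    (e3 : k5 * y2 - k6 * s2 * e - k7 * s2 * f = 0)
    (e4 : k1 * s0 * e - k2 * y1 + k3 * s1 * e = 0)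
    (e5 : k4 * s1 * e - k5 * y2 + k6 * s2 * e = 0)
    (e6 : k7 * s2 * f - k8 * y3 + k9 * s1 * f = 0)
    (e7 : k10 * s1 * f - k11 * y4 + k12 * s0 * f = 0)
    (e8 : -k1 * s0 * e + k2 * y1 - (k3 + k4) * s1 * e + k5 * y2 - k6 * s2 * e = 0)
    (e9 : -k7 * s2 * f + k8 * y3 - (k9 + k10) * s1 * f + k11 * y4 - k12 * s0 * f = 0) :
    s0 = k10 * s1 * f / (k1 * e) ∧
    s2 = k4 * s1 * e / (k7 * f) ∧
    y1 = (k10 * s1 * f + k3 * s1 * e) / k2 ∧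
    y2 = (k4 * k7 * s1 * e * f + k4 * k6 * s1 * e ^ 2) / (k5 * k7 * f) ∧
    y3 = (k4 * s1 * e + k9 * s1 * f) / k8 ∧
    y4 = (k1 * k10 * s1 * e * f + k10 * k12 * s1 * f ^ 2) / (k1 * k11 * e) := by
  have h0 : k1 * s0 * e = k10 * s1 * f := by linarith
  have h2 : k7 * s2 * f = k4 * s1 * e := by linarith
  refine ⟨?_, ?_, ?_, ?_, ?_, ?_⟩
  · rw [eq_div_iff (by positivity)]; linarith
  · rw [eq_div_iff (by positivity)]; linarith
  · rw [eq_div_iff (by positivity)]; linarith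
  · rw [eq_div_iff (by positivity)]
    linear_combination -(k7 * f) * e5 + k6 * e * h2
  · rw [eq_div_iff (by positivity)]; linarith
  · rw [eq_div_iff (by positivity)]
    linear_combination -(k1 * e) * e7 + k12 * f * h0
end

section
/- The determinant sign criterion in the monostationary case for the 1-site network: every monomial of the polynomial det(M(x)) for the modified 1-site phosphorylation–dephosphorylation network (given explicitly as a sum of 30 terms, each of the form -k_i k_j k_l times a monomial in e, f, s_0, s_1) has negative coefficient; hence for all positive species concentrations and all positive rate constants, sign(det(M(x))) = -1 = (-1)^s with s = 3. -/
set_option maxHeartbeats 4000000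
set_option maxRecDepth 10000


/-- **Determinant sign criterion for the modified 1-site
phosphorylation–dephosphorylation network.** For all positive rate constants
`k_1,…,k_6` and positive species concentrations `s_0, s_1, e, f`, the determinant of the
matrix `M(x)` (the Jacobian of `φ_c`, with variables ordered `s_0, s_1, y_1, y_2, e, f`)
is negative: `sign (det M(x)) = -1 = (-1)^s` with `s = 3`. -/
theorem one_site_det_M_neg
    (k1 k2 k3 k4 k5 k6 : ℝ)
    (hk1 : 0 < k1) (hk2 : 0 < k2) (hk3 : 0 < k3)
    (hk4 : 0 < k4) (hk5 : 0 < k5) (hk6 : 0 < k6)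
    (s0 s1 e f : ℝ) (hs0 : 0 < s0) (hs1 : 0 < s1) (he : 0 < e) (hf : 0 < f) :
    (Matrix.det !![1, 1, 1, 1, 0, 0;
        0, -k3 * e - k4 * f, k2, 0, -k3 * s1, -k4 * s1;
        0, 0, 1, 0, 1, 0;
        0, 0, 0, 1, 0, 1;
        -k1 * e, -k3 * e, k2, 0, -k1 * s0 - k3 * s1, 0;
        -k6 * f, -k4 * f, 0, k5, 0, -k4 * s1 - k6 * s0] < 0) ∧
    Real.sign (Matrix.det !![1, 1, 1, 1, 0, 0;
        0, -k3 * e - k4 * f, k2, 0, -k3 * s1, -k4 * s1;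
        0, 0, 1, 0, 1, 0;
        0, 0, 0, 1, 0, 1;
        -k1 * e, -k3 * e, k2, 0, -k1 * s0 - k3 * s1, 0;
        -k6 * f, -k4 * f, 0, k5, 0, -k4 * s1 - k6 * s0]) = (-1 : ℝ) ^ 3 := by
  have key : Matrix.det !![1, 1, 1, 1, 0, 0;
        0, -k3 * e - k4 * f, k2, 0, -k3 * s1, -k4 * s1;
        0, 0, 1, 0, 1, 0;
        0, 0, 0, 1, 0, 1;
        -k1 * e, -k3 * e, k2, 0, -k1 * s0 - k3 * s1, 0;
        -k6 * f, -k4 * f, 0, k5, 0, -k4 * s1 - k6 * s0] =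
      -(k3 * k4 * k6 * s1 * f * f +
        k3 * k4 * k6 * s1 * e * f +
        k3 * k4 * k6 * s1 * s1 * f +
        k3 * k4 * k6 * s0 * s1 * f +
        k3 * k4 * k5 * s1 * f +
        k2 * k4 * k6 * f * f +
        k2 * k4 * k6 * s1 * f +
        k2 * k4 * k6 * s0 * f +
        k2 * k4 * k5 * f +
        k1 * k4 * k6 * s0 * f * f +
        k1 * k4 * k6 * s0 * e * f +
        k1 * k4 * k6 * s0 * s1 * f +
        k1 * k4 * k6 * s0 * s0 * f +
        k1 * k4 * k5 * e * f +
        k1 * k4 * k5 * s0 * f +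
        k1 * k3 * k6 * s0 * e * f +
        k1 * k3 * k6 * s0 * e * e +
        k1 * k3 * k6 * s0 * s1 * e +
        k1 * k3 * k6 * s0 * s0 * e +
        k1 * k3 * k5 * e * e +
        k1 * k3 * k5 * s1 * e +
        k1 * k3 * k5 * s0 * e +
        k1 * k3 * k4 * s1 * e * f +
        k1 * k3 * k4 * s1 * e * e +
        k1 * k3 * k4 * s1 * s1 * e +
        k1 * k3 * k4 * s0 * s1 * e +
        k1 * k2 * k6 * s0 * e +
        k1 * k2 * k5 * e +
        k1 * k2 * k4 * e * f +
        k1 * k2 * k4 * s1 * e) := by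
    simp (config := { decide := true }) [Matrix.det_succ_row_zero, Fin.sum_univ_succ,
      Matrix.submatrix_apply, Fin.succAbove, Fin.castSucc, Fin.castAdd, Fin.castLE,
      Matrix.cons_val_zero, Matrix.cons_val_one, Matrix.head_cons, Matrix.cons_val_succ]
    ring
  have hpos : (0:ℝ) < k3 * k4 * k6 * s1 * f * f +
        k3 * k4 * k6 * s1 * e * f +
        k3 * k4 * k6 * s1 * s1 * f +
        k3 * k4 * k6 * s0 * s1 * f +
        k3 * k4 * k5 * s1 * f +
        k2 * k4 * k6 * f * f +
        k2 * k4 * k6 * s1 * f +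
        k2 * k4 * k6 * s0 * f +
        k2 * k4 * k5 * f +
        k1 * k4 * k6 * s0 * f * f +
        k1 * k4 * k6 * s0 * e * f +
        k1 * k4 * k6 * s0 * s1 * f +
        k1 * k4 * k6 * s0 * s0 * f +
        k1 * k4 * k5 * e * f +
        k1 * k4 * k5 * s0 * f +
        k1 * k3 * k6 * s0 * e * f +
        k1 * k3 * k6 * s0 * e * e +
        k1 * k3 * k6 * s0 * s1 * e +
        k1 * k3 * k6 * s0 * s0 * e +
        k1 * k3 * k5 * e * e +
        k1 * k3 * k5 * s1 * e +
        k1 * k3 * k5 * s0 * e +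
        k1 * k3 * k4 * s1 * e * f +
        k1 * k3 * k4 * s1 * e * e +
        k1 * k3 * k4 * s1 * s1 * e +
        k1 * k3 * k4 * s0 * s1 * e +
        k1 * k2 * k6 * s0 * e +
        k1 * k2 * k5 * e +
        k1 * k2 * k4 * e * f +
        k1 * k2 * k4 * s1 * e := by positivity
  have hneg : Matrix.det !![1, 1, 1, 1, 0, 0;
        0, -k3 * e - k4 * f, k2, 0, -k3 * s1, -k4 * s1;
        0, 0, 1, 0, 1, 0;
        0, 0, 0, 1, 0, 1;
        -k1 * e, -k3 * e, k2, 0, -k1 * s0 - k3 * s1, 0;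
        -k6 * f, -k4 * f, 0, k5, 0, -k4 * s1 - k6 * s0] < 0 := by
    rw [key]; linarith
  exact ⟨hneg, by rw [Real.sign_of_neg hneg]; norm_num⟩
end
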